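/- Let S be a cancellative commutative monoid over a field k of characteristic zero, and ∂ : k[S] → k[S] a homogeneous locally nilpotent derivation. Then ker ∂ = k[F] for some face F of S. -/

import Mathlib

/-!
Write `D χ^m = c m • χ^(e m)`. The Leibniz rule applied to `χ^(a+b) = χ^a χ^b` shows that the
exponents `m` with `c m = 0` form a submonoid `F`, and that `a + e b = e a + b` whenever
`c a ≠ 0 ≠ c b`. By cancellation `e` is then injective off `F`, so `D` maps the monomials outside
`F` to distinct monomials, and `ker D = k[F]`.

`F` is a face by the degree argument for locally nilpotent derivations: if `D^p χ^a` and
`D^q χ^b` are the last nonzero iterates, the general Leibniz rule gives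
`D^(p+q) χ^(a+b) = (p+q).choose p • D^p χ^a * D^q χ^b`, a nonzero monomial in characteristic
zero. If `χ^(a+b) ∈ ker D` this forces `p + q = 0`, so `χ^a ∈ ker D`.
-/

open Finset
open scoped AddMonoidAlgebra

theorem exists_iterate_ne_zero_and_iterate_succ_eq_zero {M : Type*} [Zero M] {f : M → M}
    {x : M} (hx : x ≠ 0) (h : ∃ n, f^[n] x = 0) : ∃ p, f^[p] x ≠ 0 ∧ f^[p + 1] x = 0 := by
  classical
  have hpos : 0 < Nat.find h :=
    Nat.pos_of_ne_zero fun h0 ↦ hx (by simpa [h0] using Nat.find_spec h)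
  refine ⟨Nat.find h - 1, Nat.find_min h (by omega), ?_⟩
  rw [Nat.sub_add_cancel hpos]
  exact Nat.find_spec h

namespace Derivation

variable {R A : Type*} [CommSemiring R] [CommSemiring A] [Algebra R A] (D : Derivation R A A)

theorem iterate_apply_mul (n : ℕ) (a b : A) :
    D^[n] (a * b) = ∑ ij ∈ antidiagonal n, n.choose ij.1 • (D^[ij.1] a * D^[ij.2] b) := by
  induction n with
  | zero => simp
  | succ n ih =>
    rw [sum_antidiagonal_choose_succ_nsmul (M := A) (fun i j ↦ D^[i] a * D^[j] b) n]
    simp only [Function.iterate_succ_apply', ih, map_sum, map_nsmul, leibniz, smul_eq_mul]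
    rw [← sum_add_distrib]
    refine sum_congr rfl fun ij hij ↦ ?_
    rw [n.choose_symm_of_eq_add (HasAntidiagonal.mem_antidiagonal.1 hij).symm]
    ring

variable {D}

theorem iterate_apply_eq_zero_of_le {a : A} {m n : ℕ} (h : D^[m] a = 0) (hmn : m ≤ n) :
    D^[n] a = 0 := by
  obtain ⟨l, rfl⟩ := Nat.exists_eq_add_of_le hmn
  rw [add_comm, Function.iterate_add_apply, h, iterate_map_zero]

theorem iterate_apply_mul_of_iterate_succ_eq_zero {a b : A} {p q : ℕ}
    (ha : D^[p + 1] a = 0) (hb : D^[q + 1] b = 0) :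
    D^[p + q] (a * b) = (p + q).choose p • (D^[p] a * D^[q] b) := by
  rw [iterate_apply_mul]
  refine sum_eq_single_of_mem (p, q) (mem_antidiagonal.2 rfl) fun ⟨i, j⟩ hij hne ↦ ?_
  dsimp only
  rw [HasAntidiagonal.mem_antidiagonal] at hij
  rcases Nat.lt_or_ge p i with hi | hi
  · rw [iterate_apply_eq_zero_of_le ha hi, zero_mul, smul_zero]
  · have hj : q + 1 ≤ j := by
      by_contra hj
      exact hne (Prod.ext (by omega) (by omega))
    rw [iterate_apply_eq_zero_of_le hb hj, mul_zero, smul_zero]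

end Derivation

namespace AddMonoidAlgebra

variable {k S : Type*}

theorem eq_of_single_add_single_eq_single [Semiring k] {x y z : S} {α β γ : k}
    (hα : α ≠ 0) (hβ : β ≠ 0) (h : single x α + single y β = single z γ) : x = y := by
  classical
  by_contra hxy
  have hx := congr(($h).coeff x)
  have hy := congr(($h).coeff y)
  simp only [coeff_add, coeff_single, Finsupp.add_apply, Finsupp.single_apply, if_neg hxy,
    if_neg (Ne.symm hxy)] at hx hy
  split_ifs at hx hy <;> simp_all

def kerExponents [CommSemiring k] [AddCommMonoid S] (D : Derivation k k[S] k[S]) :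
    AddSubmonoid S where
  carrier := {m | D (single m 1) = 0}
  zero_mem' := D.map_one_eq_zero
  add_mem' {a b} ha hb := by
    show D (single (a + b) 1) = 0
    rw [← one_mul (1 : k), ← single_mul_single, D.leibniz, ha, hb, smul_zero,
      smul_zero, add_zero]

section Homogeneous

variable [CommSemiring k] [AddCommMonoid S] {D : Derivation k k[S] k[S]} {e : S → S} {c : S → k}

theorem derivation_apply_single
    (hD : ∀ m, D (single m 1) = single (e m) (c m)) (m : S) (r : k) :
    D (single m r) = single (e m) (r * c m) := by
  rw [show single m r = r • single m 1 by rw [smul_single', mul_one], D.map_smul, hD,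
    smul_single']

theorem exists_derivation_iterate_single_eq
    (hD : ∀ m, D (single m 1) = single (e m) (c m)) (n : ℕ) (m : S) (r : k) :
    ∃ m' r', D^[n] (single m r) = single m' r' := by
  induction n generalizing m r with
  | zero => exact ⟨m, r, rfl⟩
  | succ n ih =>
    rw [Function.iterate_succ_apply, derivation_apply_single hD]
    exact ih _ _

theorem mem_kerExponents_iff
    (hD : ∀ m, D (single m 1) = single (e m) (c m)) {m : S} :
    m ∈ kerExponents D ↔ c m = 0 := by
  rw [← single_eq_zero (m := e m), ← hD]
  rfl

theorem add_shift_eq_shift_add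
    (hD : ∀ m, D (single m 1) = single (e m) (c m)) {a b : S} (ha : c a ≠ 0) (hb : c b ≠ 0) :
    a + e b = e a + b := by
  refine eq_of_single_add_single_eq_single hb ha (γ := c (a + b)) (z := e (a + b)) ?_
  rw [← hD, ← one_mul (1 : k), ← single_mul_single, D.leibniz, hD, hD, smul_eq_mul, smul_eq_mul,
    single_mul_single, single_mul_single, one_mul, one_mul, add_comm b]

theorem mem_kerExponents_of_add_mem [NoZeroDivisors k] [CharZero k]
    (hD : ∀ m, D (single m 1) = single (e m) (c m)) (hlnd : ∀ f : k[S], ∃ n, D^[n] f = 0)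
    {a b : S} (hab : a + b ∈ kerExponents D) : a ∈ kerExponents D := by
  by_contra ha
  obtain ⟨p, hp, hp'⟩ := exists_iterate_ne_zero_and_iterate_succ_eq_zero
    (single_ne_zero.2 one_ne_zero) (hlnd (single a 1))
  obtain ⟨q, hq, hq'⟩ := exists_iterate_ne_zero_and_iterate_succ_eq_zero
    (single_ne_zero.2 one_ne_zero) (hlnd (single b 1))
  have hp₀ : p ≠ 0 := by
    rintro rfl
    exact ha hp'
  have hvanish : D^[p + q] (single a 1 * single b 1) = 0 := by
    rw [single_mul_single, one_mul]
    exact Derivation.iterate_apply_eq_zero_of_le (m := 1) hab (by omega)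
  rw [Derivation.iterate_apply_mul_of_iterate_succ_eq_zero hp' hq'] at hvanish
  obtain ⟨a', α, hα⟩ := exists_derivation_iterate_single_eq hD p a 1
  obtain ⟨b', β, hβ⟩ := exists_derivation_iterate_single_eq hD q b 1
  rw [hα, single_ne_zero] at hp
  rw [hβ, single_ne_zero] at hq
  rw [hα, hβ, single_mul_single, smul_single, single_eq_zero, nsmul_eq_mul] at hvanish
  exact mul_ne_zero (Nat.cast_ne_zero.2 (Nat.choose_pos (by omega)).ne') (mul_ne_zero hp hq)
    hvanish

end Homogeneous

section Cancellative

variable [CommSemiring k] [AddCancelCommMonoid S] {D : Derivation k k[S] k[S]} {e : S → S}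
  {c : S → k}

theorem injOn_shift
    (hD : ∀ m, D (single m 1) = single (e m) (c m)) : Set.InjOn e {m | c m ≠ 0} :=
  fun a ha b hb hab ↦ add_right_cancel (b := e b) <| by
    rw [add_shift_eq_shift_add hD ha hb, hab, add_comm]

theorem derivation_eq_zero_iff [NoZeroDivisors k]
    (hD : ∀ m, D (single m 1) = single (e m) (c m)) (f : k[S]) :
    D f = 0 ↔ ∀ m ∈ f.coeff.support, m ∈ kerExponents D := by
  classical
  have hDf : D f = ∑ m ∈ f.coeff.support, single (e m) (f.coeff m * c m) := by
    conv_lhs => rw [← sum_coeff_single f]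
    rw [Finsupp.sum, map_sum]
    exact sum_congr rfl fun m _ ↦ derivation_apply_single hD m _
  simp only [mem_kerExponents_iff hD]
  refine ⟨fun h m₀ hm₀ ↦ ?_, fun h ↦ ?_⟩
  · by_contra hc₀
    have hcoeff := congr(($(hDf.symm.trans h)).coeff (e m₀))
    rw [coeff_sum, Finsupp.finsetSum_apply, sum_eq_single_of_mem m₀ hm₀] at hcoeff
    · simp [hc₀, Finsupp.mem_support_iff.1 hm₀] at hcoeff
    · intro m _ hne
      by_cases hcm : c m = 0
      · simp [hcm]
      · rw [coeff_single, Finsupp.single_apply, if_neg fun heq ↦ hne (injOn_shift hD hcm hc₀ heq)]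
  · rw [hDf]
    exact sum_eq_zero fun m hm ↦ by rw [h m hm, mul_zero, single_zero]

end Cancellative

end AddMonoidAlgebra

/-- The kernel of a homogeneous locally nilpotent derivation of
the semigroup algebra of a cancellative commutative monoid `S` is `k[F]` for a
face `F` of `S`: an element lies in the kernel iff its support lies in `F`. -/
theorem kernel_of_homogeneous_lnd_is_face_algebra
    {k S : Type*} [Field k] [CharZero k] [AddCancelCommMonoid S]
    (D : Derivation k (AddMonoidAlgebra k S) (AddMonoidAlgebra k S))
    (hhom : ∀ m : S, ∃ (m' : S) (c : k),
      D (AddMonoidAlgebra.single m (1 : k)) = AddMonoidAlgebra.single m' c)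
    (hlnd : ∀ f : AddMonoidAlgebra k S, ∃ n : ℕ, (⇑D)^[n] f = 0) :
    ∃ F : AddSubmonoid S,
      (∀ a b : S, a + b ∈ F → a ∈ F ∧ b ∈ F) ∧
      (∀ f : AddMonoidAlgebra k S, D f = 0 ↔ ∀ m ∈ f.coeff.support, m ∈ F) := by
  choose e c hD using hhom
  refine ⟨AddMonoidAlgebra.kerExponents D, fun a b hab ↦ ⟨?_, ?_⟩,
    AddMonoidAlgebra.derivation_eq_zero_iff hD⟩
  · exact AddMonoidAlgebra.mem_kerExponents_of_add_mem hD hlnd hab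
  · exact AddMonoidAlgebra.mem_kerExponents_of_add_mem hD hlnd (add_comm a b ▸ hab)
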